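/- Let N ⊆ M_d(ℂ) be a unital *-subalgebra, E : M_d(ℂ) → N the trace-preserving conditional expectation onto N, and σ, ρ positive definite states on M_d(ℂ). Then ‖σ_N^{−1/2} ρ_N σ_N^{−1/2}‖∞ ≤ ‖σ^{−1/2} ρ σ^{−1/2}‖∞. -/

import Mathlib

open Matrix MeasureTheory Filter Topology Kronecker ComplexOrder

/-- Apply a real function to a matrix via the functional calculus for Hermitian
matrices (and return `0` on non-Hermitian input). -/
noncomputable def mfun {d : ℕ} (f : ℝ → ℝ) (A : Matrix (Fin d) (Fin d) ℂ) :
    Matrix (Fin d) (Fin d) ℂ :=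
  if hA : A.IsHermitian then hA.cfc f else 0

/-- Square root of a Hermitian positive semidefinite matrix. -/
noncomputable def msqrt {d : ℕ} (A : Matrix (Fin d) (Fin d) ℂ) : Matrix (Fin d) (Fin d) ℂ :=
  mfun Real.sqrt A

/-- Inverse square root of a Hermitian positive semidefinite matrix (Moore–Penrose
pseudoinverse of the square root in the singular case, since `(0 : ℝ)⁻¹ = 0`). -/
noncomputable def misqrt {d : ℕ} (A : Matrix (Fin d) (Fin d) ℂ) : Matrix (Fin d) (Fin d) ℂ :=
  mfun (fun x => (Real.sqrt x)⁻¹) A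

/-- Inverse of a Hermitian matrix (Moore–Penrose pseudoinverse in the singular case). -/
noncomputable def minv {d : ℕ} (A : Matrix (Fin d) (Fin d) ℂ) : Matrix (Fin d) (Fin d) ℂ :=
  mfun (fun x => x⁻¹) A

/-- Logarithm of a positive definite matrix. -/
noncomputable def mlog {d : ℕ} (A : Matrix (Fin d) (Fin d) ℂ) : Matrix (Fin d) (Fin d) ℂ :=
  mfun Real.log A

/-- Frobenius (Schatten-2) norm ‖A‖₂ = tr(AᴴA)^(1/2). -/
noncomputable def frob {n : Type*} [Fintype n] (A : Matrix n n ℂ) : ℝ :=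
  Real.sqrt (Matrix.trace (Aᴴ * A)).re

/-- Operator norm ‖A‖∞ of a matrix, acting on the Euclidean space ℂᵈ. -/
noncomputable def opNorm {n : Type*} [Fintype n] [DecidableEq n] (A : Matrix n n ℂ) : ℝ :=
  ‖LinearMap.toContinuousLinearMap (Matrix.toEuclideanLin A)‖

/-- The Belavkin–Staszewski relative entropy
`Ŝ_BS(σ‖ρ) = −tr[σ log(σ^{−1/2} ρ σ^{−1/2})]`. -/
noncomputable def BS {d : ℕ} (σ ρ : Matrix (Fin d) (Fin d) ℂ) : ℝ :=
  -(Matrix.trace (σ * mlog (misqrt σ * ρ * misqrt σ))).re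

/-- The maximal f-divergence `Ŝ_f(σ‖ρ) = tr[ρ^{1/2} f(ρ^{−1/2} σ ρ^{−1/2}) ρ^{1/2}]`. -/
noncomputable def hatS {d : ℕ} (f : ℝ → ℝ) (σ ρ : Matrix (Fin d) (Fin d) ℂ) : ℝ :=
  (Matrix.trace (msqrt ρ * mfun f (misqrt ρ * σ * misqrt ρ) * msqrt ρ)).re

/-- The Umegaki relative entropy `D(σ‖ρ) = tr[σ (log σ − log ρ)]`. -/
noncomputable def relEnt {d : ℕ} (σ ρ : Matrix (Fin d) (Fin d) ℂ) : ℝ :=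
  (Matrix.trace (σ * (mlog σ - mlog ρ))).re

/-- The Choi matrix of a linear map between matrix algebras. -/
noncomputable def choi {d₁ d₂ : ℕ} (T : Matrix (Fin d₁) (Fin d₁) ℂ →ₗ[ℂ] Matrix (Fin d₂) (Fin d₂) ℂ) :
    Matrix (Fin d₁ × Fin d₂) (Fin d₁ × Fin d₂) ℂ :=
  Matrix.of fun p q => T (Matrix.single p.1 q.1 1) p.2 q.2

/-- A quantum channel: a completely positive (equivalently, with positive semidefinite Choi
matrix) trace-preserving linear map. -/
def IsCPTP {d₁ d₂ : ℕ} (T : Matrix (Fin d₁) (Fin d₁) ℂ →ₗ[ℂ] Matrix (Fin d₂) (Fin d₂) ℂ) :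
    Prop :=
  (choi T).PosSemidef ∧ ∀ A, (T A).trace = A.trace

/-- Partial trace over the second tensor factor. -/
noncomputable def ptrace2 {d₂ s : ℕ} (M : Matrix (Fin d₂ × Fin s) (Fin d₂ × Fin s) ℂ) :
    Matrix (Fin d₂) (Fin d₂) ℂ :=
  Matrix.of fun i j => ∑ k : Fin s, M (i, k) (j, k)

/-- The Loewner order: `A ≤ B` iff `B - A` is positive semidefinite. -/
def Loewner {n : ℕ} (A B : Matrix (Fin n) (Fin n) ℂ) : Prop := (B - A).PosSemidef

/-- A function `f : (0,∞) → ℝ` is operator convex. -/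
def OperatorConvex (f : ℝ → ℝ) : Prop :=
  ∀ (n : ℕ) (A B : Matrix (Fin n) (Fin n) ℂ), A.PosDef → B.PosDef →
    ∀ t : ℝ, 0 ≤ t → t ≤ 1 →
      Loewner (mfun f ((t : ℂ) • A + ((1 - t : ℝ) : ℂ) • B))
        ((t : ℂ) • mfun f A + ((1 - t : ℝ) : ℂ) • mfun f B)

/-- A function `f : (0,∞) → ℝ` is operator monotone decreasing. -/
def OperatorAntitone (f : ℝ → ℝ) : Prop :=
  ∀ (n : ℕ) (A B : Matrix (Fin n) (Fin n) ℂ), A.PosDef → B.PosDef →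
    Loewner A B → Loewner (mfun f B) (mfun f A)


/-! The quantity `‖σ^{-1/2} ρ σ^{-1/2}‖` is the least `λ ≥ 0` with `ρ ≤ λ σ` in the Loewner
order, since conjugation by the invertible self-adjoint `σ^{-1/2}` is an order isomorphism sending
`σ` to `1`. A positive unital linear map preserves `ρ ≤ λ σ`, and it sends `σ ≥ ε • 1` to
`E σ ≥ ε • 1`, so `E σ` is again positive definite and the characterization applies to it. -/

open scoped MatrixOrder Matrix.Norms.L2Operator

lemma isUnit_of_mul_mul_eq_one {M : Type*} [Monoid M] {a s : M} (h : s * a * s = 1) : IsUnit s :=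
  have hright : s * (a * s) = 1 := by rw [← mul_assoc, h]
  ⟨⟨s, a * s, hright, by rw [← left_inv_eq_right_inv h hright]; exact h⟩, rfl⟩

section CStarAlgebra

variable {A : Type*} [CStarAlgebra A] [PartialOrder A] [StarOrderedRing A]

lemma norm_mul_mul_le_iff_le_smul {a b s : A} (hs : IsSelfAdjoint s) (hsas : s * a * s = 1)
    (hb : 0 ≤ b) {r : ℝ} (hr : 0 ≤ r) : ‖s * b * s‖ ≤ r ↔ b ≤ r • a := by
  have hconj : star s * (r • a - b) * s = algebraMap ℝ A r - s * b * s := by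
    rw [hs.star_eq, mul_sub, sub_mul, mul_smul_comm, smul_mul_assoc, hsas,
      Algebra.algebraMap_eq_smul_one]
  rw [CStarAlgebra.norm_le_iff_le_algebraMap _ hr (hs.conjugate_nonneg hb), ← sub_nonneg,
    ← hconj, (isUnit_of_mul_mul_eq_one hsas).star_left_conjugate_nonneg_iff, sub_nonneg]

variable {B : Type*} [CStarAlgebra B] [PartialOrder B] [StarOrderedRing B]

lemma IsStrictlyPositive.map_of_monotone {E : A →ₗ[ℂ] B} (hE : Monotone E) (hE1 : E 1 = 1)
    {a : A} (ha : IsStrictlyPositive a) : IsStrictlyPositive (E a) := by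
  rcases subsingleton_or_nontrivial A with hA | hA
  · rw [Subsingleton.elim a 1, hE1]
    exact isStrictlyPositive_one
  obtain ⟨r, hr, hra⟩ := (CFC.exists_pos_algebraMap_le_iff ha.isSelfAdjoint).2
    fun x hx => ha.spectrum_pos hx
  refine (isStrictlyPositive_algebraMap (A := B) hr).of_le ?_
  simpa only [Algebra.algebraMap_eq_smul_one, LinearMap.map_smul_of_tower, hE1] using hE hra

end CStarAlgebra

section Matrix

variable {d : ℕ}

lemma mfun_eq_cfc {A : Matrix (Fin d) (Fin d) ℂ} (hA : A.IsHermitian) (f : ℝ → ℝ) :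
    mfun f A = cfc f A := by
  rw [mfun, dif_pos hA, hA.cfc_eq]

lemma isSelfAdjoint_mfun (f : ℝ → ℝ) (A : Matrix (Fin d) (Fin d) ℂ) :
    IsSelfAdjoint (mfun f A) := by
  by_cases hA : A.IsHermitian
  · rw [mfun_eq_cfc hA]
    exact cfc_predicate f A
  · rw [mfun, dif_neg hA]
    exact .zero _

lemma misqrt_mul_mul_misqrt {A : Matrix (Fin d) (Fin d) ℂ} (hA : A.PosDef) :
    misqrt A * A * misqrt A = 1 := by
  have hcont (f : ℝ → ℝ) : ContinuousOn f (spectrum ℝ A) := A.finite_real_spectrum.continuousOn f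
  rw [misqrt, mfun_eq_cfc hA.1]
  nth_rw 2 [← cfc_id' ℝ A]
  rw [← cfc_mul _ _ A (hcont _) (hcont _), ← cfc_mul _ _ A (hcont _) (hcont _), ← cfc_one ℝ A]
  refine cfc_congr fun x hx => ?_
  have hx0 : 0 < x := hA.isStrictlyPositive.spectrum_pos hx
  simp only [Pi.one_apply]
  field_simp
  exact (Real.sq_sqrt hx0.le).symm

lemma opNorm_misqrt_mul_mul_misqrt_le_iff {σ ρ : Matrix (Fin d) (Fin d) ℂ} (hσ : σ.PosDef)
    (hρ : ρ.PosSemidef) {r : ℝ} (hr : 0 ≤ r) :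
    opNorm (misqrt σ * ρ * misqrt σ) ≤ r ↔ ρ ≤ r • σ :=
  -- `opNorm` is definitionally the norm of `Matrix.Norms.L2Operator`.
  norm_mul_mul_le_iff_le_smul (isSelfAdjoint_mfun _ σ) (misqrt_mul_mul_misqrt hσ) hρ.nonneg hr

end Matrix

theorem stmt9_general {d : ℕ}
    (N : Subalgebra ℂ (Matrix (Fin d) (Fin d) ℂ))
    (E : Matrix (Fin d) (Fin d) ℂ →ₗ[ℂ] Matrix (Fin d) (Fin d) ℂ)
    (hEpos : ∀ A : Matrix (Fin d) (Fin d) ℂ, A.PosSemidef → (E A).PosSemidef)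
    (hEfix : ∀ B ∈ N, E B = B)
    (σ ρ : Matrix (Fin d) (Fin d) ℂ)
    (hσ : σ.PosDef)
    (hρ : ρ.PosDef) :
    opNorm (misqrt (E σ) * E ρ * misqrt (E σ)) ≤ opNorm (misqrt σ * ρ * misqrt σ) := by
  have hEmono : Monotone E := (PositiveLinearMap.mk₀ E fun A hA =>
    (hEpos A (Matrix.nonneg_iff_posSemidef.1 hA)).nonneg).monotone
  have hEσ : (E σ).PosDef :=
    (hσ.isStrictlyPositive.map_of_monotone hEmono (hEfix 1 N.one_mem)).posDef
  set r := opNorm (misqrt σ * ρ * misqrt σ)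
  have hr : 0 ≤ r := norm_nonneg _
  have hρσ : ρ ≤ r • σ := (opNorm_misqrt_mul_mul_misqrt_le_iff hσ hρ.posSemidef hr).1 le_rfl
  rw [opNorm_misqrt_mul_mul_misqrt_le_iff hEσ (hEpos ρ hρ.posSemidef) hr]
  simpa only [LinearMap.map_smul_of_tower] using hEmono hρσ

theorem stmt9 {d : ℕ}
    (N : Subalgebra ℂ (Matrix (Fin d) (Fin d) ℂ))
    (hNstar : ∀ A ∈ N, Aᴴ ∈ N)
    (E : Matrix (Fin d) (Fin d) ℂ →ₗ[ℂ] Matrix (Fin d) (Fin d) ℂ)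
    (hEpos : ∀ A : Matrix (Fin d) (Fin d) ℂ, A.PosSemidef → (E A).PosSemidef)
    (hEmem : ∀ A : Matrix (Fin d) (Fin d) ℂ, E A ∈ N)
    (hEfix : ∀ B ∈ N, E B = B)
    (hEmod : ∀ (A : Matrix (Fin d) (Fin d) ℂ), ∀ B ∈ N, E (A * B) = E A * B)
    (hEtr : ∀ A : Matrix (Fin d) (Fin d) ℂ, (E A).trace = A.trace)
    (σ ρ : Matrix (Fin d) (Fin d) ℂ)
    (hσ : σ.PosDef) (hσtr : σ.trace = 1)
    (hρ : ρ.PosDef) (hρtr : ρ.trace = 1) :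
    opNorm (misqrt (E σ) * E ρ * misqrt (E σ)) ≤ opNorm (misqrt σ * ρ * misqrt σ) :=
  stmt9_general N E hEpos hEfix σ ρ hσ hρ
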